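/- For every λ ∈ ℝ, let μ_λ be the Lie bracket on ℝ^7 with nonzero basis brackets [e1,e2]=e4, [e1,e3]=e5, [e1,e4]=e6, [e1,e6]=e7, [e2,e3]=e6, [e2,e4]=λe7, [e2,e5]=e7, [e3,e5]=e7. Then μ_λ satisfies the Jacobi identity, φ = (5/17)·diag(1,2,2,3,3,4,5) is a derivation of (ℝ^7,μ_λ), and φ is pre-Einstein, i.e. trace(φ∘ψ) = trace(ψ) for every derivation ψ of (ℝ^7,μ_λ). -/

import Mathlib

open Finset

noncomputable section

/-- `ℝ⁷` with its standard basis and standard inner product. -/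
abbrev V7 : Type := Fin 7 → ℝ

/-- The standard basis vector `e i`. -/
def e (i : Fin 7) : V7 := Pi.single i 1

/-- The standard inner product on `ℝ⁷`. -/
def dot (x y : V7) : ℝ := ∑ i, x i * y i

/-- Structure constants built from a list of entries `(i, j, k, a)`, each meaning that
`μ (e i) (e j)` has component `a` along `e k` (and `μ (e j) (e i)` has component `-a`);
all unlisted basis brackets are `0`. -/
def toC (L : List (Fin 7 × Fin 7 × Fin 7 × ℝ)) (i j k : Fin 7) : ℝ :=
  (L.map fun t =>
      (if t.1 = i ∧ t.2.1 = j ∧ t.2.2.1 = k then t.2.2.2 else 0)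
    - (if t.1 = j ∧ t.2.1 = i ∧ t.2.2.1 = k then t.2.2.2 else 0)).sum

/-- The bilinear skew-symmetric map on `ℝ⁷` with structure constants `c`. -/
def br (c : Fin 7 → Fin 7 → Fin 7 → ℝ) (x y : V7) : V7 :=
  fun k => ∑ i, ∑ j, x i * y j * c i j k

lemma br_add_left (c : Fin 7 → Fin 7 → Fin 7 → ℝ) (x x' y : V7) :
    br c (x + x') y = br c x y + br c x' y := by
  funext k
  simp only [br, Pi.add_apply, ← Finset.sum_add_distrib]
  exact Finset.sum_congr rfl fun i _ => Finset.sum_congr rfl fun j _ => by ring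

lemma br_smul_left (c : Fin 7 → Fin 7 → Fin 7 → ℝ) (r : ℝ) (x y : V7) :
    br c (r • x) y = r • br c x y := by
  funext k
  simp only [br, Pi.smul_apply, smul_eq_mul, Finset.mul_sum]
  exact Finset.sum_congr rfl fun i _ => Finset.sum_congr rfl fun j _ => by ring

lemma br_add_right (c : Fin 7 → Fin 7 → Fin 7 → ℝ) (x y y' : V7) :
    br c x (y + y') = br c x y + br c x y' := by
  funext k
  simp only [br, Pi.add_apply, ← Finset.sum_add_distrib]
  exact Finset.sum_congr rfl fun i _ => Finset.sum_congr rfl fun j _ => by ring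

lemma br_smul_right (c : Fin 7 → Fin 7 → Fin 7 → ℝ) (r : ℝ) (x y : V7) :
    br c x (r • y) = r • br c x y := by
  funext k
  simp only [br, Pi.smul_apply, smul_eq_mul, Finset.mul_sum]
  exact Finset.sum_congr rfl fun i _ => Finset.sum_congr rfl fun j _ => by ring

lemma br_zero_left (c : Fin 7 → Fin 7 → Fin 7 → ℝ) (y : V7) : br c 0 y = 0 := by
  funext k; simp [br]

lemma br_zero_right (c : Fin 7 → Fin 7 → Fin 7 → ℝ) (x : V7) : br c x 0 = 0 := by
  funext k; simp [br]

/-- The space of derivations of the algebra `(ℝ⁷, br c)`, i.e. the linear maps `D` with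
`D (μ x y) = μ (D x) y + μ x (D y)` for all `x, y`, as a submodule of the endomorphisms. -/
def derivations (c : Fin 7 → Fin 7 → Fin 7 → ℝ) : Submodule ℝ (Module.End ℝ V7) where
  carrier := {D | ∀ x y, D (br c x y) = br c (D x) y + br c x (D y)}
  add_mem' := by
    intro D E hD hE x y
    simp only [LinearMap.add_apply, hD x y, hE x y, br_add_left, br_add_right]
    abel
  zero_mem' := by
    intro x y
    simp [br_zero_left, br_zero_right]
  smul_mem' := by
    intro r D hD x y
    simp only [LinearMap.smul_apply, hD x y, smul_add, br_smul_left, br_smul_right]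

/-- The Jacobi identity for the bracket `br c`. -/
def Jacobi (c : Fin 7 → Fin 7 → Fin 7 → ℝ) : Prop :=
  ∀ x y z : V7, br c (br c x y) z + br c (br c y z) x + br c (br c z x) y = 0

/-- Skew-symmetry of the bracket `br c`. -/
def Skew (c : Fin 7 → Fin 7 → Fin 7 → ℝ) : Prop :=
  ∀ x y : V7, br c x y = - br c y x

/-- The diagonal endomorphism `diag (a 1, …, a 7)` of `ℝ⁷`, `e i ↦ a i • e i`. -/
def diagL (a : Fin 7 → ℝ) : Module.End ℝ V7 :=
  LinearMap.pi fun i => a i • LinearMap.proj i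

/-- Structure constants of the bracket `μ_λ` with nonzero basis brackets
`[e1,e2]=e4, [e1,e3]=e5, [e1,e4]=e6, [e1,e6]=e7, [e2,e3]=e6, [e2,e4]=λe7, [e2,e5]=e7,
[e3,e5]=e7`. -/
def c7 (lam : ℝ) : Fin 7 → Fin 7 → Fin 7 → ℝ :=
  toC [(0, 1, 3, (1:ℝ)),
   (0, 2, 4, 1),
   (0, 3, 5, 1),
   (0, 5, 6, 1),
   (1, 2, 5, 1),
   (1, 3, 6, lam),
   (1, 4, 6, 1),
   (2, 4, 6, 1)]
/-! The weights `w = (1, 2, 2, 3, 3, 4, 5)` grade the bracket: every nonzero structure constant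
`c i j k` has `w k = w i + w j`, so `diag w` is a derivation. For an arbitrary derivation `ψ`,
the derivation identity on pairs of basis vectors yields linear relations among the diagonal
entries `ψ (e i) i` (after one off-diagonal entry is shown to vanish), leaving a two-parameter
family of diagonals on which `trace (φ ∘ ψ)` and `trace ψ` agree. -/

lemma toC_swap (L : List (Fin 7 × Fin 7 × Fin 7 × ℝ)) (i j k : Fin 7) :
    toC L j i k = -toC L i j k := by
  rw [toC, toC, ← neg_one_mul, ← List.sum_map_mul_left]
  exact congrArg List.sum (List.map_congr_left fun _ _ => by ring)

lemma skew_of_antisymm {c : Fin 7 → Fin 7 → Fin 7 → ℝ} (hc : ∀ i j k, c j i k = -c i j k) :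
    Skew c := by
  intro x y
  funext k
  simp only [br, Pi.neg_apply, ← Finset.sum_neg_distrib]
  rw [Finset.sum_comm]
  exact Finset.sum_congr rfl fun i _ => Finset.sum_congr rfl fun j _ => by rw [hc]; ring

lemma diagL_apply (a : Fin 7 → ℝ) (x : V7) (i : Fin 7) : diagL a x i = a i * x i := rfl

lemma diagL_mem_derivations {c : Fin 7 → Fin 7 → Fin 7 → ℝ} {a : Fin 7 → ℝ}
    (hc : ∀ i j k, (a i + a j) * c i j k = a k * c i j k) : diagL a ∈ derivations c := by
  intro x y
  funext k
  simp only [diagL_apply, br, Pi.add_apply, Finset.mul_sum, ← Finset.sum_add_distrib]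
  exact Finset.sum_congr rfl fun i _ => Finset.sum_congr rfl fun j _ => by
    linear_combination -(x i * y j) * hc i j k

lemma toC_homogeneous {L : List (Fin 7 × Fin 7 × Fin 7 × ℝ)} {a : Fin 7 → ℝ}
    (hL : ∀ t ∈ L, a t.2.2.1 = a t.1 + a t.2.1) (i j k : Fin 7) :
    (a i + a j) * toC L i j k = a k * toC L i j k := by
  simp only [toC, ← List.sum_map_mul_left]
  refine congrArg List.sum (List.map_congr_left fun ⟨p, q, r, s⟩ ht => ?_)
  have hw : a r = a p + a q := hL _ ht
  dsimp only
  split_ifs with h₁ h₂ h₂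
  · ring
  · obtain ⟨rfl, rfl, rfl⟩ := h₁
    linear_combination -s * hw
  · obtain ⟨rfl, rfl, rfl⟩ := h₂
    linear_combination s * hw
  · ring

lemma trace_eq_sum_apply (f : Module.End ℝ V7) : LinearMap.trace ℝ V7 f = ∑ i, f (e i) i := by
  rw [LinearMap.trace_eq_matrix_trace ℝ (Pi.basisFun ℝ (Fin 7))]
  simp [Matrix.trace, e]

lemma br_e_e (c : Fin 7 → Fin 7 → Fin 7 → ℝ) (i j : Fin 7) :
    br c (e i) (e j) = ∑ l, c i j l • e l := by
  funext k
  simp [br, e, Pi.single_apply]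

lemma sum_apply_e_of_mem_derivations {c : Fin 7 → Fin 7 → Fin 7 → ℝ} {ψ : Module.End ℝ V7}
    (hψ : ψ ∈ derivations c) (i j k : Fin 7) :
    ∑ l, c i j l * ψ (e l) k = ∑ l, ψ (e i) l * c l j k + ∑ l, ψ (e j) l * c i l k := by
  have h := congrFun (hψ (e i) (e j)) k
  rw [br_e_e, map_sum] at h
  simpa [br, e, Pi.single_apply, mul_comm] using h

def bracket7 (lam : ℝ) (x y : V7) : V7 := fun k =>
  if k = 3 then x 0 * y 1 - x 1 * y 0
  else if k = 4 then x 0 * y 2 - x 2 * y 0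
  else if k = 5 then (x 0 * y 3 - x 3 * y 0) + (x 1 * y 2 - x 2 * y 1)
  else if k = 6 then (x 0 * y 5 - x 5 * y 0) + lam * (x 1 * y 3 - x 3 * y 1)
    + (x 1 * y 4 - x 4 * y 1) + (x 2 * y 4 - x 4 * y 2)
  else 0

lemma br_c7 (lam : ℝ) (x y : V7) : br (c7 lam) x y = bracket7 lam x y := by
  funext k
  fin_cases k <;> simp [br, c7, toC, bracket7, Fin.sum_univ_seven] <;> ring

lemma jacobi_c7 (lam : ℝ) : Jacobi (c7 lam) := by
  intro x y z
  simp only [br_c7]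
  funext k
  fin_cases k <;> simp [bracket7] <;> ring

lemma c7_homogeneous (lam : ℝ) (i j k : Fin 7) :
    (![1, 2, 2, 3, 3, 4, 5] i + ![1, 2, 2, 3, 3, 4, 5] j) * c7 lam i j k
      = (![1, 2, 2, 3, 3, 4, 5] : Fin 7 → ℝ) k * c7 lam i j k :=
  toC_homogeneous (by simp; norm_num) i j k

lemma smul_diagL_mem_derivations_c7 (lam : ℝ) :
    ((5/17 : ℝ) • diagL ![1, 2, 2, 3, 3, 4, 5]) ∈ derivations (c7 lam) :=
  Submodule.smul_mem _ _ (diagL_mem_derivations (c7_homogeneous lam))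

lemma trace_smul_diagL_comp_c7 {lam : ℝ} {ψ : Module.End ℝ V7}
    (hψ : ψ ∈ derivations (c7 lam)) :
    LinearMap.trace ℝ V7 (((5/17 : ℝ) • diagL ![1, 2, 2, 3, 3, 4, 5]) ∘ₗ ψ)
      = LinearMap.trace ℝ V7 ψ := by
  have rel := sum_apply_e_of_mem_derivations hψ
  have h013 : ψ (e 3) 3 = ψ (e 0) 0 + ψ (e 1) 1 := by
    simpa [c7, toC, Fin.sum_univ_seven] using rel 0 1 3
  have h024 : ψ (e 4) 3 = ψ (e 2) 1 := by simpa [c7, toC] using rel 0 2 3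
  have h035 : ψ (e 5) 5 = ψ (e 0) 0 + ψ (e 3) 3 := by simpa [c7, toC] using rel 0 3 5
  have h045 : 0 = ψ (e 4) 3 := by simpa [c7, toC] using rel 0 4 5
  have h056 : ψ (e 6) 6 = ψ (e 0) 0 + ψ (e 5) 5 := by simpa [c7, toC] using rel 0 5 6
  have h125 : ψ (e 5) 5 = ψ (e 1) 1 + ψ (e 2) 2 := by simpa [c7, toC] using rel 1 2 5
  have h246 : ψ (e 6) 6 = ψ (e 2) 1 + ψ (e 2) 2 + ψ (e 4) 4 := by
    simpa [c7, toC, Fin.sum_univ_seven] using rel 2 4 6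
  rw [trace_eq_sum_apply, trace_eq_sum_apply]
  simp [Fin.sum_univ_seven, diagL_apply]
  linarith

/-- The bracket satisfies the Jacobi identity (and is skew-symmetric), `φ` is a derivation
of it, and `φ` is pre-Einstein: `trace (φ ∘ ψ) = trace ψ` for every derivation `ψ`. -/
theorem stmt (lam : ℝ) :
    Skew (c7 lam) ∧ Jacobi (c7 lam) ∧
    ((5/17 : ℝ) • diagL ![1, 2, 2, 3, 3, 4, 5]) ∈ derivations (c7 lam) ∧
    ∀ ψ ∈ derivations (c7 lam),
      LinearMap.trace ℝ V7 (((5/17 : ℝ) • diagL ![1, 2, 2, 3, 3, 4, 5]) ∘ₗ ψ) = LinearMap.trace ℝ V7 ψ :=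
  ⟨skew_of_antisymm (toC_swap _), jacobi_c7 lam, smul_diagL_mem_derivations_c7 lam,
    fun _ ↦ trace_smul_diagL_comp_c7⟩
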